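/- Let φ: (R, m) → (S, n) be a flat local homomorphism of Noetherian local rings with dim(S/mS) = 0, and let A be an Artinian R-module. Then Att_R(A) = { φ^{-1}(P) : P ∈ Att_S(A ⊗_R S) }. -/

import Mathlib

/-!
If `S` is flat and local over `R`, it is faithfully flat, so `S ⊗ Q` is `p`-secondary over
`R` whenever `Q` is. Hence for a `p`-secondary quotient `A ⧸ N`, any prime `P` attached to
`S ⊗ (A ⧸ N)` (one exists as `S` is Noetherian) contracts to `p`: the corresponding secondary
quotient is secondary over `R` both for `p` and for `P ∩ R`.
Conversely, if `(S ⊗ A) ⧸ N` is `P`-secondary, the image of `A` in it generates it over `S`,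
so it has the same `R`-annihilator, whose radical is `P ∩ R`; and an Artinian module whose
annihilator has prime radical `q` has the `q`-secondary quotient `y • A`, for `y ∉ q` making
`y • A` minimal.
-/

open IsLocalRing TensorProduct

noncomputable section

/-- A module is `p`-secondary: every `x : R` acts surjectively or nilpotently,
and the radical of the annihilator is `p`. -/
def IsSecondary (R : Type) [CommRing R] (M : Type) [AddCommGroup M] [Module R M]
    (p : Ideal R) : Prop :=
  (Module.annihilator R M).radical = p ∧
    ∀ x : R, Function.Surjective (fun m : M => x • m) ∨ ∃ n : ℕ, ∀ m : M, x ^ n • m = 0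

/-- The attached primes of a module: primes `p` such that the module has a
`p`-secondary quotient (for representable, e.g. Artinian, modules this agrees
with the primes occurring in a minimal secondary representation). -/
def attachedPrimes (R : Type) [CommRing R] (M : Type) [AddCommGroup M] [Module R M] :
    Set (Ideal R) :=
  {p | p.IsPrime ∧ ∃ N : Submodule R M, IsSecondary R (M ⧸ N) p}

/-- The `i`-th local cohomology module of `M` with support in `J`. -/
def H (R : Type) [CommRing R] (J : Ideal R) (i : ℕ) (M : Type) [AddCommGroup M]
    [Module R M] : ModuleCat R :=
  (localCohomology J i).obj (ModuleCat.of R M)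

/-- The Krull dimension of a module, as `dim (R / Ann M)`. -/
def mDim (R : Type) [CommRing R] (M : Type) [AddCommGroup M] [Module R M] : WithBot ℕ∞ :=
  ringKrullDim (R ⧸ Module.annihilator R M)

section Secondary

variable {T : Type} [CommRing T] {M N : Type} [AddCommGroup M] [Module T M]
  [AddCommGroup N] [Module T N] {p : Ideal T}

theorem LinearMap.smul_surjective_of_surjective (f : M →ₗ[T] N) (hf : Function.Surjective f)
    {x : T} (hx : Function.Surjective fun m : M => x • m) :
    Function.Surjective fun n : N => x • n := by
  intro n
  obtain ⟨m, rfl⟩ := hf n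
  obtain ⟨m', rfl⟩ := hx m
  exact ⟨f m', (map_smul f x m').symm⟩

theorem notMem_radical_annihilator_of_smul_surjective [Nontrivial M] {x : T}
    (hx : Function.Surjective fun m : M => x • m) :
    x ∉ (Module.annihilator T M).radical := by
  rintro ⟨n, hn⟩
  have hxn : Function.Surjective fun m : M => x ^ n • m := by
    simpa only [smul_iterate] using hx.iterate n
  obtain ⟨m, hm⟩ := exists_ne (0 : M)
  obtain ⟨m', rfl⟩ := hxn m
  exact hm (Module.mem_annihilator.mp hn m')

theorem IsSecondary.nontrivial (h : IsSecondary T M p) (hp : p ≠ ⊤) : Nontrivial M := by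
  by_contra hM
  rw [not_nontrivial_iff_subsingleton] at hM
  exact hp (by rw [← h.1, Module.annihilator_eq_top_iff.mpr hM, Ideal.radical_top])

theorem isSecondary_of_smul_surjective [Nontrivial M]
    (hsurj : ∀ x ∉ p, Function.Surjective fun m : M => x • m)
    (hle : p ≤ (Module.annihilator T M).radical) : IsSecondary T M p := by
  refine ⟨le_antisymm (fun x hx => ?_) hle, fun x => ?_⟩
  · by_contra hxp
    exact notMem_radical_annihilator_of_smul_surjective (hsurj x hxp) hx
  · by_cases hxp : x ∈ p
    · obtain ⟨n, hn⟩ := hle hxp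
      exact Or.inr ⟨n, Module.mem_annihilator.mp hn⟩
    · exact Or.inl (hsurj x hxp)

theorem IsSecondary.smul_surjective (h : IsSecondary T M p) {x : T} (hx : x ∉ p) :
    Function.Surjective fun m : M => x • m :=
  (h.2 x).resolve_right fun ⟨n, hn⟩ => hx (h.1 ▸ ⟨n, Module.mem_annihilator.mpr hn⟩)

theorem IsSecondary.of_surjective [Nontrivial N] (h : IsSecondary T M p) (f : M →ₗ[T] N)
    (hf : Function.Surjective f) : IsSecondary T N p :=
  isSecondary_of_smul_surjective
    (fun _ hx => f.smul_surjective_of_surjective hf (h.smul_surjective hx))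
    (h.1 ▸ Ideal.radical_mono (f.annihilator_le_of_surjective hf))

theorem mem_attachedPrimes_of_surjective (f : M →ₗ[T] N) (hf : Function.Surjective f)
    (hp : p.IsPrime) (h : IsSecondary T N p) : p ∈ attachedPrimes T M := by
  let e := f.quotKerEquivOfSurjective hf
  have := h.nontrivial hp.ne_top
  have : Nontrivial (M ⧸ LinearMap.ker f) := e.toEquiv.nontrivial
  exact ⟨hp, LinearMap.ker f, h.of_surjective e.symm.toLinearMap e.symm.surjective⟩

theorem attachedPrimes_subset_of_surjective (f : M →ₗ[T] N) (hf : Function.Surjective f) :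
    attachedPrimes T N ⊆ attachedPrimes T M := by
  rintro p ⟨hp, V, h⟩
  exact mem_attachedPrimes_of_surjective (V.mkQ ∘ₗ f) (V.mkQ_surjective.comp hf) hp h

end Secondary

section Existence

variable {T : Type} [CommRing T] {M : Type} [AddCommGroup M] [Module T M] {p : Ideal T}

theorem mem_attachedPrimes_of_radical_annihilator_eq [IsArtinian T M] (hp : p.IsPrime)
    (hrad : (Module.annihilator T M).radical = p) : p ∈ attachedPrimes T M := by
  -- `y • M` is minimal among the `z • M` with `z ∉ p`, so every `x ∉ p` is onto on it.
  obtain ⟨W, ⟨y, hy, rfl⟩, hmin⟩ := IsArtinian.set_has_minimal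
    {W | ∃ y ∉ p, W = LinearMap.range (LinearMap.lsmul T M y)} ⟨_, 1, p.one_notMem, rfl⟩
  have hsurj : ∀ x ∉ p, Function.Surjective fun w : LinearMap.range (LinearMap.lsmul T M y) =>
      x • w := by
    intro x hx ⟨_, m, rfl⟩
    have hle : LinearMap.range (LinearMap.lsmul T M (x * y)) ≤
        LinearMap.range (LinearMap.lsmul T M y) := by
      rintro _ ⟨m', rfl⟩
      exact ⟨x • m', by simp only [LinearMap.lsmul_apply, mul_smul]; exact smul_comm y x m'⟩
    have heq := eq_of_le_of_not_lt hle
      (hmin _ ⟨x * y, fun h => (hp.mem_or_mem h).elim hx hy, rfl⟩)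
    obtain ⟨m', hm'⟩ := heq.ge (LinearMap.mem_range_self (LinearMap.lsmul T M y) m)
    exact ⟨⟨y • m', m', rfl⟩, Subtype.ext (by simpa [mul_smul] using hm')⟩
  have hy' : y ∉ Module.annihilator T M := fun h => hy (hrad ▸ Ideal.le_radical h)
  obtain ⟨m, hm⟩ := not_forall.mp (mt Module.mem_annihilator.mpr hy')
  have : Nontrivial (LinearMap.range (LinearMap.lsmul T M y)) :=
    ⟨⟨⟨y • m, m, rfl⟩, 0, fun h => hm (congrArg Subtype.val h)⟩⟩
  refine mem_attachedPrimes_of_surjective _ (LinearMap.lsmul T M y).surjective_rangeRestrict hp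
    (isSecondary_of_smul_surjective hsurj ?_)
  exact hrad ▸ Ideal.radical_mono (LinearMap.annihilator_le_of_injective (Submodule.subtype _)
    Subtype.val_injective)

theorem attachedPrimes_nonempty [IsNoetherianRing T] [Nontrivial M] :
    (attachedPrimes T M).Nonempty := by
  obtain ⟨_, ⟨V, hV, rfl⟩, hmax⟩ := set_has_maximal_iff_noetherian.mpr inferInstance
    {I | ∃ V : Submodule T M, V ≠ ⊤ ∧ Module.annihilator T (M ⧸ V) = I}
    ⟨_, ⊥, bot_ne_top, rfl⟩
  have : Nontrivial (M ⧸ V) := Submodule.Quotient.nontrivial_iff.mpr hV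
  -- By maximality of `Ann (M ⧸ V)`, each `x` kills `M ⧸ V` or acts on it surjectively.
  have hsurj : ∀ x ∉ Module.annihilator T (M ⧸ V),
      Function.Surjective fun q : M ⧸ V => x • q := by
    intro x hx
    have htop : V ⊔ LinearMap.range (LinearMap.lsmul T M x) = ⊤ := by
      by_contra hne
      refine hmax _ ⟨_, hne, rfl⟩ (lt_of_le_of_ne ?_ fun h => hx (h ▸ ?_))
      · simp only [Submodule.annihilator_quotient]
        exact Submodule.colon_mono le_sup_left subset_rfl
      · rw [Submodule.annihilator_quotient, Submodule.mem_colon]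
        exact fun m _ => Submodule.mem_sup_right (LinearMap.mem_range_self _ m)
    intro q
    obtain ⟨m, rfl⟩ := Submodule.Quotient.mk_surjective V q
    obtain ⟨v, hv, _, ⟨m', rfl⟩, rfl⟩ :=
      Submodule.mem_sup.mp (htop ▸ Submodule.mem_top : m ∈ _)
    refine ⟨Submodule.Quotient.mk m', ?_⟩
    change x • Submodule.Quotient.mk m' = _
    rw [← Submodule.Quotient.mk_smul, Submodule.Quotient.eq]
    simpa using V.neg_mem hv
  have hprime : (Module.annihilator T (M ⧸ V)).IsPrime := by
    refine Ideal.isPrime_iff.mpr ⟨fun h => ?_, fun {a b} hab => ?_⟩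
    · exact not_subsingleton (M ⧸ V) (Module.annihilator_eq_top_iff.mp h)
    · by_contra! hnot
      have hab' : Function.Surjective fun q : M ⧸ V => (a * b) • q := by
        simpa only [Function.comp_def, mul_smul] using (hsurj a hnot.1).comp (hsurj b hnot.2)
      exact notMem_radical_annihilator_of_smul_surjective hab' (Ideal.le_radical hab)
  exact ⟨_, hprime, V, isSecondary_of_smul_surjective hsurj Ideal.le_radical⟩

end Existence

section BaseChange

variable {R S : Type} [CommRing R] [CommRing S] [Algebra R S]

theorem IsSecondary.comap {M : Type} [AddCommGroup M] [Module R M] [Module S M]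
    [IsScalarTower R S M] {P : Ideal S} (h : IsSecondary S M P) :
    IsSecondary R M (P.comap (algebraMap R S)) := by
  refine ⟨by rw [← Module.comap_annihilator (R := S), ← Ideal.comap_radical, h.1],
    fun x => ?_⟩
  simp only [← algebraMap_smul (A := S) (M := M) x, ← algebraMap_smul (A := S) (M := M) (x ^ _),
    map_pow]
  exact h.2 (algebraMap R S x)

theorem LinearMap.lTensor_lsmul (Q : Type) [AddCommGroup Q] [Module R Q] (r : R) :
    (LinearMap.lsmul R Q r).lTensor S = LinearMap.lsmul R (S ⊗[R] Q) r :=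
  LinearMap.lTensor_smul_action S Q r

section FaithfullyFlat

variable [Module.FaithfullyFlat R S] {Q : Type} [AddCommGroup Q] [Module R Q]

theorem Module.annihilator_tensorProduct_of_faithfullyFlat :
    Module.annihilator R (S ⊗[R] Q) = Module.annihilator R Q := by
  ext r
  rw [Module.mem_annihilator_iff_lsmul_eq_zero, Module.mem_annihilator_iff_lsmul_eq_zero,
    Module.FaithfullyFlat.zero_iff_lTensor_zero R S (LinearMap.lsmul R Q r),
    LinearMap.lTensor_lsmul]

theorem IsSecondary.tensorProduct {p : Ideal R} (h : IsSecondary R Q p) :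
    IsSecondary R (S ⊗[R] Q) p := by
  refine ⟨by rw [Module.annihilator_tensorProduct_of_faithfullyFlat, h.1], fun x => ?_⟩
  refine (h.2 x).imp (fun hx => ?_) fun ⟨n, hn⟩ => ⟨n, ?_⟩
  · have := LinearMap.lTensor_surjective S (g := LinearMap.lsmul R Q x) hx
    rwa [LinearMap.lTensor_lsmul] at this
  · rw [← Module.mem_annihilator, Module.annihilator_tensorProduct_of_faithfullyFlat]
    exact Module.mem_annihilator.mpr hn

end FaithfullyFlat

variable {A : Type} [AddCommGroup A] [Module R A]

theorem Module.annihilator_eq_of_span_eq_top {M : Type} [AddCommGroup M] [Module R M]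
    [Module S M] [IsScalarTower R S M] {W : Submodule R M}
    (hW : Submodule.span S (W : Set M) = ⊤) :
    Module.annihilator R W = Module.annihilator R M := by
  refine le_antisymm (fun r hr => ?_)
    (LinearMap.annihilator_le_of_injective W.subtype Subtype.val_injective)
  have hker : Submodule.span S (W : Set M) ≤
      LinearMap.ker (LinearMap.lsmul S M (algebraMap R S r)) :=
    Submodule.span_le.mpr fun w hw => by
      simpa using congrArg Subtype.val (Module.mem_annihilator.mp hr ⟨w, hw⟩)
  rw [hW, top_le_iff, LinearMap.ker_eq_top] at hker
  exact Module.mem_annihilator.mpr fun m => by simpa using LinearMap.congr_fun hker m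

theorem comap_mem_attachedPrimes_of_span_range_eq_top [IsArtinian R A] {M : Type}
    [AddCommGroup M] [Module R M] [Module S M] [IsScalarTower R S M] (g : A →ₗ[R] M)
    (hg : Submodule.span S (LinearMap.range g : Set M) = ⊤) {P : Ideal S}
    (hP : P ∈ attachedPrimes S M) : P.comap (algebraMap R S) ∈ attachedPrimes R A := by
  obtain ⟨hPp, N, hN⟩ := hP
  let g' : A →ₗ[R] M ⧸ N := N.mkQ.restrictScalars R ∘ₗ g
  have hg' : Submodule.span S (LinearMap.range g' : Set (M ⧸ N)) = ⊤ := by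
    rw [LinearMap.range_comp, Submodule.map_coe, LinearMap.coe_restrictScalars,
      Submodule.span_image, hg, Submodule.map_top, Submodule.range_mkQ]
  refine attachedPrimes_subset_of_surjective g'.rangeRestrict g'.surjective_rangeRestrict
    (mem_attachedPrimes_of_radical_annihilator_eq (hPp.comap _) ?_)
  rw [Module.annihilator_eq_of_span_eq_top hg']
  exact hN.comap.1

theorem span_range_mk_one_eq_top :
    Submodule.span S (LinearMap.range (TensorProduct.mk R S A 1) : Set (S ⊗[R] A)) = ⊤ := by
  rw [LinearMap.coe_range, ← Set.image_univ, ← Submodule.baseChange_span, Submodule.span_univ,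
    Submodule.baseChange_top]

theorem image_comap_attachedPrimes_tensorProduct_subset [IsArtinian R A] :
    (fun P => P.comap (algebraMap R S)) '' attachedPrimes S (S ⊗[R] A) ⊆
      attachedPrimes R A := by
  rintro _ ⟨P, hP, rfl⟩
  exact comap_mem_attachedPrimes_of_span_range_eq_top _ span_range_mk_one_eq_top hP

theorem attachedPrimes_subset_image_comap_tensorProduct [Module.FaithfullyFlat R S]
    [IsNoetherianRing S] :
    attachedPrimes R A ⊆
      (fun P => P.comap (algebraMap R S)) '' attachedPrimes S (S ⊗[R] A) := by
  rintro p ⟨hp, N, hN⟩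
  have hSN : IsSecondary R (S ⊗[R] (A ⧸ N)) p := hN.tensorProduct
  have := hSN.nontrivial hp.ne_top
  obtain ⟨P, hPp, V, hV⟩ := attachedPrimes_nonempty (T := S) (M := S ⊗[R] (A ⧸ N))
  have := hV.nontrivial hPp.ne_top
  refine ⟨P, attachedPrimes_subset_of_surjective _
    (LinearMap.baseChange_surjective S N.mkQ_surjective) ⟨hPp, V, hV⟩, ?_⟩
  -- `S ⊗ (A ⧸ N) ⧸ V` is secondary over `R` both for `P ∩ R` and for `p`.
  exact hV.comap.1.symm.trans (hSN.of_surjective (V.mkQ.restrictScalars R) V.mkQ_surjective).1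

end BaseChange

theorem stmt5_general (R : Type) [CommRing R] [IsLocalRing R]
    (S : Type) [CommRing S] [IsNoetherianRing S] [IsLocalRing S]
    [Algebra R S] [Module.Flat R S] [IsLocalHom (algebraMap R S)]
    (A : Type) [AddCommGroup A] [Module R A] [IsArtinian R A] :
    attachedPrimes R A =
      (fun P => P.comap (algebraMap R S)) '' attachedPrimes S (S ⊗[R] A) := by
  have : Module.FaithfullyFlat R S := .of_flat_of_isLocalHom
  exact attachedPrimes_subset_image_comap_tensorProduct.antisymm
    image_comap_attachedPrimes_tensorProduct_subset

/-- If `R → S` is a flat local homomorphism of Noetherian local rings with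
`dim (S/mS) = 0` and `A` is an Artinian `R`-module, then
`Att_R A = { P ∩ R : P ∈ Att_S (S ⊗_R A) }`. -/
theorem stmt5 (R : Type) [CommRing R] [IsNoetherianRing R] [IsLocalRing R]
    (S : Type) [CommRing S] [IsNoetherianRing S] [IsLocalRing S]
    [Algebra R S] [Module.Flat R S] [IsLocalHom (algebraMap R S)]
    (hfib : ringKrullDim (S ⧸ (maximalIdeal R).map (algebraMap R S)) = 0)
    (A : Type) [AddCommGroup A] [Module R A] [IsArtinian R A] :
    attachedPrimes R A =
      (fun P => P.comap (algebraMap R S)) '' attachedPrimes S (S ⊗[R] A) :=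
  stmt5_general R S A
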